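/- arXiv:2005.09799 — 5 statements merged into one kernel-verified Lean document; each statement's English description precedes it below -/
import Mathlib

section
/- Let (W,S) be a Coxeter system with W finite, σ a length-preserving automorphism of W, and w₀ the longest element. For every x ∈ W with x ≤ σ(x)w₀ in the Bruhat order, one has ℓ_R(x w₀ σ(x)⁻¹) ≤ ℓ(w₀) − 2ℓ(x). Consequently ℓ_R(O) ≤ ℓ(w₀) − 2·max{ℓ(x) : x ≤ σ(x)w₀}, where O is the σ-conjugacy class of w₀. -/
/-!
The key input is `ℓ(w₀ u) = ℓ(w₀) - ℓ(u)`, which rests on the strong exchange property. As in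
the standard proof of the latter, `W` acts on `W × ZMod 2` by letting `s` send `(t, ε)` to
`(s t s, ε + [t = s])`; the braid relations hold because the left inversion sequence of a braid
word `(s s')^m` consists of two copies of the same list. The resulting cocycle `η(w, t)` is the
parity of the number of occurrences of `t` in the left inversion sequence of any word for `w`,
so for a reduced word the left inversions of `w` are exactly its `ℓ(w)` entries. Every
reflection is an inversion of `w₀`, so by `η(w₀ u, t) = 1 + η(u, w₀⁻¹ t w₀)` conjugation by `w₀`
sends the inversions of `w₀ u` into the complement of those of `u`.

A Bruhat chain from `x` to `σ(x) w₀` has at most `ℓ(σ(x) w₀) - ℓ(x) = ℓ(w₀) - 2 ℓ(x)` steps,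
each a right multiplication by a reflection `tᵢ`, and `x w₀ σ(x)⁻¹` is the conjugate by `x` of
`(t₁ ⋯ t_k)⁻¹`.
-/

/-- The Bruhat order on a Coxeter group: `u ≤ v` iff one can pass from `u` to `v` by
successively multiplying on the right by reflections, increasing the length at each step. -/
def BruhatLE {B W : Type*} [Group W] {M : CoxeterMatrix B} (cs : CoxeterSystem M W)
    (u v : W) : Prop :=
  Relation.ReflTransGen
    (fun a b => ∃ t : W, cs.IsReflection t ∧ b = a * t ∧ cs.length a < cs.length b) u v

/-- The reflection length `ℓ_R(w)` of `w`: the minimal number of reflections whose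
product is `w`. -/
noncomputable def reflLength {B W : Type*} [Group W] {M : CoxeterMatrix B}
    (cs : CoxeterSystem M W) (w : W) : ℕ :=
  sInf {n | ∃ l : List W, (∀ t ∈ l, cs.IsReflection t) ∧ l.length = n ∧ l.prod = w}

/-- The reflection length of a subset: `ℓ_R(O) = min {ℓ_R(w) : w ∈ O}`. -/
noncomputable def reflLengthSet {B W : Type*} [Group W] {M : CoxeterMatrix B}
    (cs : CoxeterSystem M W) (O : Set W) : ℕ :=
  sInf (reflLength cs '' O)

theorem List.even_count_of_getElem_add_eq {α : Type*} [BEq α] [LawfulBEq α] {l : List α} {p : ℕ}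
    (hl : l.length = 2 * p) (hper : ∀ k (hk : k + p < l.length), l[k + p] = l[k]) (a : α) :
    Even (l.count a) := by
  have hdrop : l.drop p = l.take p := by
    apply List.ext_getElem (by simp; omega)
    intro k h₁ h₂
    simp only [getElem_drop, getElem_take, add_comm p k]
    exact hper k (by simp at h₂; omega)
  rw [← take_append_drop p l, count_append, hdrop]
  exact ⟨_, rfl⟩

namespace CoxeterSystem

open List

variable {B W : Type*} [Group W] {M : CoxeterMatrix B} (cs : CoxeterSystem M W)

local prefix:100 "s " => cs.simple
local prefix:100 "π " => cs.wordProd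
local prefix:100 "lis " => cs.leftInvSeq

open scoped Classical

theorem prod_map_alternatingWord_two_mul {G : Type*} [Monoid G] (f : B → G) (i i' : B) (m : ℕ) :
    ((alternatingWord i i' (2 * m)).map f).prod = (f i * f i') ^ m := by
  induction m with
  | zero => simp [alternatingWord]
  | succ m ih =>
    rw [mul_add_one, alternatingWord_succ', alternatingWord_succ']
    simp [ih, pow_succ', mul_assoc]

theorem wordProd_braidWord (i i' : B) : π (alternatingWord i i' (2 * M i i')) = 1 := by
  rw [wordProd, prod_map_alternatingWord_two_mul, simple_mul_simple_pow]

theorem even_count_leftInvSeq_braidWord (i i' : B) (t : W) :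
    Even ((lis (alternatingWord i i' (2 * M i i'))).count t) := by
  refine List.even_count_of_getElem_add_eq (p := M i i') (by simp) (fun k hk => ?_) t
  simp only [length_leftInvSeq, length_alternatingWord] at hk
  rw [getElem_leftInvSeq_alternatingWord cs i i' _ _ hk,
    getElem_leftInvSeq_alternatingWord cs i i' _ _ (by omega),
    prod_alternatingWord_eq_mul_pow, prod_alternatingWord_eq_mul_pow]
  have hodd : ∀ n, ¬ Even (2 * n + 1) := fun n => Nat.not_even_iff_odd.mpr (odd_two_mul_add_one n)
  rw [if_neg (hodd _), if_neg (hodd _), show (2 * (k + M i i') + 1) / 2 = k + M i i' by omega,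
    show (2 * k + 1) / 2 = k by omega, pow_add, M.symmetric, simple_mul_simple_pow, mul_one]

noncomputable def conjParityPerm (i : B) : Equiv.Perm (W × ZMod 2) :=
  (MulAut.conj (s i)).toEquiv.prodShear fun t => Equiv.addRight (if t = s i then 1 else 0)

theorem conjParityPerm_apply (i : B) (t : W) (ε : ZMod 2) :
    conjParityPerm cs i (t, ε) = (s i * t * (s i)⁻¹, ε + if t = s i then 1 else 0) := rfl

theorem prod_map_conjParityPerm_apply (ω : List B) (t : W) (ε : ZMod 2) :
    (ω.map (conjParityPerm cs)).prod (t, ε) =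
      (π ω * t * (π ω)⁻¹, ε + (lis ω).count (π ω * t * (π ω)⁻¹)) := by
  induction ω with
  | nil => simp [leftInvSeq]
  | cons i ω ih =>
    set x := π ω * t * (π ω)⁻¹
    have hx : s i * π ω * t * (s i * π ω)⁻¹ = MulAut.conj (s i) x := by
      simp only [x, MulAut.conj_apply, mul_inv_rev, mul_assoc]
    rw [map_cons, prod_cons, Equiv.Perm.mul_apply, ih, conjParityPerm_apply, wordProd_cons,
      leftInvSeq, hx, count_cons, count_map_of_injective _ _ (MulAut.conj (s i)).injective]
    simp only [MulAut.conj_apply, beq_iff_eq, Prod.mk.injEq, true_and]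
    have hs : s i = s i * x * (s i)⁻¹ ↔ x = s i := by
      rw [eq_mul_inv_iff_mul_eq, mul_right_inj, eq_comm]
    rw [hs]
    split_ifs <;> push_cast <;> ring

theorem isLiftable_conjParityPerm : M.IsLiftable (conjParityPerm cs) := by
  intro i i'
  ext1 ⟨t, ε⟩
  rw [← prod_map_alternatingWord_two_mul, prod_map_conjParityPerm_apply, wordProd_braidWord]
  simpa using ZMod.natCast_eq_zero_iff_even.2 (even_count_leftInvSeq_braidWord cs i i' t)

noncomputable def conjParityHom : W →* Equiv.Perm (W × ZMod 2) :=
  cs.lift ⟨conjParityPerm cs, isLiftable_conjParityPerm cs⟩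

theorem conjParityHom_wordProd (ω : List B) :
    conjParityHom cs (π ω) = (ω.map (conjParityPerm cs)).prod := by
  rw [wordProd, map_list_prod, map_map]
  congr 1
  exact map_congr_left fun i _ => cs.lift_apply_simple (isLiftable_conjParityPerm cs) i

/-- The parity `η(w, t)` of the number of occurrences of `t` in the left inversion sequence of
any word for `w`; it is well defined because it is read off the action `conjParityHom`. -/
noncomputable def leftInvParity (w t : W) : ZMod 2 :=
  (conjParityHom cs w (w⁻¹ * t * w, 0)).2

theorem leftInvParity_wordProd (ω : List B) (t : W) :
    leftInvParity cs (π ω) t = (lis ω).count t := by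
  simp [leftInvParity, conjParityHom_wordProd, prod_map_conjParityPerm_apply, mul_assoc]

theorem conjParityHom_apply (w t : W) (ε : ZMod 2) :
    conjParityHom cs w (t, ε) = (w * t * w⁻¹, ε + leftInvParity cs w (w * t * w⁻¹)) := by
  obtain ⟨ω, rfl⟩ := cs.wordProd_surjective w
  rw [conjParityHom_wordProd, prod_map_conjParityPerm_apply, leftInvParity_wordProd]

theorem leftInvParity_mul (w₁ w₂ t : W) :
    leftInvParity cs (w₁ * w₂) t =
      leftInvParity cs w₁ t + leftInvParity cs w₂ (w₁⁻¹ * t * w₁) := by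
  have h := congrArg Prod.snd <| congrArg (· (w₂⁻¹ * (w₁⁻¹ * t * w₁) * w₂, 0))
    (map_mul (conjParityHom cs) w₁ w₂)
  simp only [Equiv.Perm.mul_apply, conjParityHom_apply, mul_assoc, mul_inv_rev,
    mul_inv_cancel_left, mul_inv_cancel, mul_one, zero_add] at h
  rw [h, add_comm, mul_assoc]

theorem leftInvParity_one (t : W) : leftInvParity cs 1 t = 0 := by
  simpa using leftInvParity_wordProd cs [] t

theorem leftInvParity_self {t : W} (ht : cs.IsReflection t) : leftInvParity cs t t = 1 := by
  obtain ⟨u, i, rfl⟩ := ht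
  have hsimple : leftInvParity cs (s i) (s i) = 1 := by
    simpa using leftInvParity_wordProd cs [i] (s i)
  have hconj : u⁻¹ * (u * s i * u⁻¹) * u = s i := by simp [mul_assoc]
  have hsplit : leftInvParity cs (u * s i * u⁻¹) (u * s i * u⁻¹) =
      leftInvParity cs u (u * s i * u⁻¹) + leftInvParity cs (s i * u⁻¹) (s i) := by
    rw [mul_assoc u, leftInvParity_mul, ← mul_assoc, hconj]
  have hsimple_mul : leftInvParity cs (s i * u⁻¹) (s i) = 1 + leftInvParity cs u⁻¹ (s i) := by
    rw [leftInvParity_mul, inv_simple, simple_mul_simple_self, one_mul, hsimple]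
  have hcancel := leftInvParity_mul cs u u⁻¹ (u * s i * u⁻¹)
  rw [mul_inv_cancel, leftInvParity_one, hconj] at hcancel
  rw [hsplit, hsimple_mul]
  linear_combination -hcancel

theorem isLeftInversion_of_leftInvParity_eq_one {w t : W} (h : leftInvParity cs w t = 1) :
    cs.IsLeftInversion w t := by
  obtain ⟨ω, hω, rfl⟩ := cs.exists_isReduced w
  rw [leftInvParity_wordProd] at h
  refine cs.isLeftInversion_of_mem_leftInvSeq hω (count_pos_iff.1 (Nat.pos_of_ne_zero ?_))
  rintro h0
  simp [h0] at h

theorem isLeftInversion_iff_leftInvParity_eq_one {w t : W} (ht : cs.IsReflection t) :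
    cs.IsLeftInversion w t ↔ leftInvParity cs w t = 1 := by
  refine ⟨fun hw => ?_, isLeftInversion_of_leftInvParity_eq_one cs⟩
  by_contra hne
  have h0 : leftInvParity cs w t = 0 := (by decide : ∀ a : ZMod 2, a ≠ 1 → a = 0) _ hne
  have htw : cs.IsLeftInversion (t * w) t := by
    refine isLeftInversion_of_leftInvParity_eq_one cs ?_
    rw [leftInvParity_mul, leftInvParity_self cs ht, inv_mul_cancel, one_mul, h0, add_zero]
  have := htw.2
  rw [← mul_assoc, ht.mul_self, one_mul] at this
  exact absurd hw.2 (not_lt.2 this.le)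

theorem isLeftInversion_wordProd_iff {ω : List B} (hω : cs.IsReduced ω) {t : W} :
    cs.IsLeftInversion (π ω) t ↔ t ∈ lis ω := by
  refine ⟨fun h => count_pos_iff.1 (Nat.pos_of_ne_zero fun h0 => ?_),
    cs.isLeftInversion_of_mem_leftInvSeq hω⟩
  have := (isLeftInversion_iff_leftInvParity_eq_one cs h.1).1 h
  simp [leftInvParity_wordProd, h0] at this

theorem finite_setOf_isLeftInversion (w : W) : {t | cs.IsLeftInversion w t}.Finite := by
  obtain ⟨ω, hω, rfl⟩ := cs.exists_isReduced w
  simp [isLeftInversion_wordProd_iff cs hω]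

theorem ncard_setOf_isLeftInversion (w : W) :
    {t | cs.IsLeftInversion w t}.ncard = cs.length w := by
  obtain ⟨ω, hω, rfl⟩ := cs.exists_isReduced w
  simp_rw [isLeftInversion_wordProd_iff cs hω, ← coe_toFinset, Set.ncard_coe_finset,
    toFinset_card_of_nodup (hω.nodup_leftInvSeq), length_leftInvSeq, hω.eq]

theorem isLeftInversion_mul_iff {w₁ w₂ t : W} (h : cs.IsLeftInversion w₁ t) :
    cs.IsLeftInversion (w₁ * w₂) t ↔ ¬ cs.IsLeftInversion w₂ (w₁⁻¹ * t * w₁) := by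
  have hconj : cs.IsReflection (w₁⁻¹ * t * w₁) := by simpa using h.1.conj w₁⁻¹
  rw [isLeftInversion_iff_leftInvParity_eq_one cs h.1,
    isLeftInversion_iff_leftInvParity_eq_one cs hconj, leftInvParity_mul,
    (isLeftInversion_iff_leftInvParity_eq_one cs h.1).1 h]
  generalize leftInvParity cs w₂ (w₁⁻¹ * t * w₁) = a
  revert a
  decide

section Longest

variable {w₀ : W}

theorem isLeftInversion_of_forall_length_le (hw₀ : ∀ w, cs.length w ≤ cs.length w₀) {t : W}
    (ht : cs.IsReflection t) : cs.IsLeftInversion w₀ t :=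
  ⟨ht, (hw₀ _).lt_of_ne (ht.length_mul_right_ne w₀)⟩

theorem length_mul_add_length_of_forall_length_le (hw₀ : ∀ w, cs.length w ≤ cs.length w₀)
    (u : W) : cs.length (w₀ * u) + cs.length u = cs.length w₀ := by
  refine le_antisymm ?_ (cs.length_le_length_mul_add_right w₀ u)
  let invSet := fun w => {t | cs.IsLeftInversion w t}
  let conj := fun t : W => w₀⁻¹ * t * w₀
  have hconj_inj : Function.Injective conj := fun a b hab => by simpa [conj] using hab
  have hdisj : Disjoint (conj '' invSet (w₀ * u)) (invSet u) := by
    rw [Set.disjoint_left]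
    rintro _ ⟨t, ht, rfl⟩
    exact (isLeftInversion_mul_iff cs (isLeftInversion_of_forall_length_le cs hw₀ ht.1)).1 ht
  have hsub : conj '' invSet (w₀ * u) ∪ invSet u ⊆ invSet w₀ := by
    rintro _ (⟨t, ht, rfl⟩ | ht)
    · exact isLeftInversion_of_forall_length_le cs hw₀ (by simpa [conj] using ht.1.conj w₀⁻¹)
    · exact isLeftInversion_of_forall_length_le cs hw₀ ht.1
  calc cs.length (w₀ * u) + cs.length u
      = (conj '' invSet (w₀ * u) ∪ invSet u).ncard := by
        rw [Set.ncard_union_eq hdisj ((finite_setOf_isLeftInversion cs _).image conj)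
          (finite_setOf_isLeftInversion cs u), Set.ncard_image_of_injective _ hconj_inj,
          ncard_setOf_isLeftInversion, ncard_setOf_isLeftInversion]
    _ ≤ (invSet w₀).ncard := Set.ncard_le_ncard hsub (finite_setOf_isLeftInversion cs w₀)
    _ = cs.length w₀ := ncard_setOf_isLeftInversion cs w₀

theorem inv_eq_self_of_forall_length_le (hw₀ : ∀ w, cs.length w ≤ cs.length w₀) :
    w₀⁻¹ = w₀ := by
  have := length_mul_add_length_of_forall_length_le cs hw₀ w₀
  exact inv_eq_of_mul_eq_one_right (cs.length_eq_zero_iff.1 (by omega))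

theorem length_mul_add_length_of_forall_length_le' (hw₀ : ∀ w, cs.length w ≤ cs.length w₀)
    (u : W) : cs.length (u * w₀) + cs.length u = cs.length w₀ := by
  rw [← length_inv, mul_inv_rev, inv_eq_self_of_forall_length_le cs hw₀, ← length_inv cs u]
  exact length_mul_add_length_of_forall_length_le cs hw₀ u⁻¹

end Longest

end CoxeterSystem

section ReflLength

variable {B W : Type*} [Group W] {M : CoxeterMatrix B} (cs : CoxeterSystem M W)

theorem reflLength_prod_le {l : List W} (hl : ∀ t ∈ l, cs.IsReflection t) :
    reflLength cs l.prod ≤ l.length :=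
  Nat.sInf_le ⟨l, hl, rfl, rfl⟩

theorem reflLength_le_length (w : W) : reflLength cs w ≤ cs.length w := by
  obtain ⟨ω, hω, rfl⟩ := cs.exists_isReduced w
  calc reflLength cs (cs.wordProd ω) ≤ (ω.map cs.simple).length :=
        reflLength_prod_le cs (by simp [cs.isReflection_simple])
    _ = cs.length (cs.wordProd ω) := by rw [List.length_map, hω.eq]

theorem reflLength_conj_prod_inv_le {l : List W} (hl : ∀ t ∈ l, cs.IsReflection t) (x : W) :
    reflLength cs (x * l.prod⁻¹ * x⁻¹) ≤ l.length := by
  have hprod : x * l.prod⁻¹ * x⁻¹ = (l.reverse.map (MulAut.conj x)).prod := by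
    rw [List.prod_inv_reverse, List.map_congr_left fun t ht => (hl t ht).inv, List.map_id',
      ← map_list_prod, MulAut.conj_apply]
  rw [hprod]
  simpa using reflLength_prod_le cs (l := l.reverse.map (MulAut.conj x))
    (by simpa using fun t ht => (hl t ht).conj x)

theorem BruhatLE.exists_isReflection_list {u v : W} (h : BruhatLE cs u v) :
    ∃ l : List W, (∀ t ∈ l, cs.IsReflection t) ∧ u * l.prod = v ∧
      l.length + cs.length u ≤ cs.length v := by
  induction h with
  | refl => exact ⟨[], by simp, by simp, by simp⟩
  | tail _ hstep ih =>
    obtain ⟨t, ht, rfl, hlt⟩ := hstep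
    obtain ⟨l, hl, hprod, hlen⟩ := ih
    refine ⟨l ++ [t], ?_, by rw [List.prod_append, List.prod_singleton, ← mul_assoc, hprod], ?_⟩
    · simpa [or_imp, forall_and] using ⟨hl, ht⟩
    · simp only [List.length_append, List.length_singleton]
      omega

theorem reflLength_mul_longest_mul_inv_add_le {w₀ : W} (hw₀ : ∀ w, cs.length w ≤ cs.length w₀)
    {x y : W} (hx : BruhatLE cs x (y * w₀)) :
    reflLength cs (x * w₀ * y⁻¹) + cs.length x + cs.length y ≤ cs.length w₀ := by
  obtain ⟨l, hl, hprod, hlen⟩ := hx.exists_isReflection_list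
  have hconj : x * w₀ * y⁻¹ = x * l.prod⁻¹ * x⁻¹ := by
    rw [eq_inv_mul_of_mul_eq hprod, mul_inv_rev, mul_inv_rev, inv_inv,
      cs.inv_eq_self_of_forall_length_le hw₀]
    group
  have := cs.length_mul_add_length_of_forall_length_le' hw₀ y
  have := reflLength_conj_prod_inv_le cs hl x
  rw [hconj]
  omega

end ReflLength

theorem statement3_general {B W : Type*} [Group W] {M : CoxeterMatrix B}
    (cs : CoxeterSystem M W)
    (σ : W ≃* W) (hσ : ∀ w, cs.length (σ w) = cs.length w)
    (w₀ : W) (hw₀ : ∀ w, cs.length w ≤ cs.length w₀) :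
    (∀ x : W, BruhatLE cs x (σ x * w₀) →
      (reflLength cs (x * w₀ * (σ x)⁻¹) : ℤ) ≤ (cs.length w₀ : ℤ) - 2 * cs.length x) ∧
    (reflLengthSet cs {w | ∃ x : W, w = x * w₀ * (σ x)⁻¹} : ℤ) ≤
      (cs.length w₀ : ℤ) -
        2 * ((sSup {n : ℕ | ∃ x : W, BruhatLE cs x (σ x * w₀) ∧ cs.length x = n} : ℕ) : ℤ) := by
  have key : ∀ x, BruhatLE cs x (σ x * w₀) →
      reflLength cs (x * w₀ * (σ x)⁻¹) + 2 * cs.length x ≤ cs.length w₀ := fun x hx => by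
    have := reflLength_mul_longest_mul_inv_add_le cs hw₀ hx
    rw [hσ] at this
    omega
  refine ⟨fun x hx => by have := key x hx; omega, ?_⟩
  have hO : ∀ x, reflLengthSet cs {w | ∃ x : W, w = x * w₀ * (σ x)⁻¹} ≤
      reflLength cs (x * w₀ * (σ x)⁻¹) := fun x => Nat.sInf_le ⟨_, ⟨x, rfl⟩, rfl⟩
  rcases Set.eq_empty_or_nonempty
    {n : ℕ | ∃ x : W, BruhatLE cs x (σ x * w₀) ∧ cs.length x = n} with hS | hS
  · have h₁ : reflLengthSet cs {w | ∃ x : W, w = x * w₀ * (σ x)⁻¹} ≤ reflLength cs w₀ := by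
      simpa using hO 1
    have h₂ := reflLength_le_length cs w₀
    rw [hS, csSup_empty, Nat.bot_eq_zero]
    omega
  · obtain ⟨x, hx, hlen⟩ :=
      Nat.sSup_mem hS ⟨cs.length w₀, by rintro _ ⟨x, -, rfl⟩; exact hw₀ x⟩
    have h₁ := key x hx
    have h₂ := hO x
    omega

/-- Let `(W, S)` be a Coxeter system with `W` finite, `σ` a length-preserving
automorphism, and `w₀` the longest element.  For every `x ∈ W` with `x ≤ σ(x) w₀` one
has `ℓ_R(x w₀ σ(x)⁻¹) ≤ ℓ(w₀) - 2 ℓ(x)`; consequently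
`ℓ_R(O) ≤ ℓ(w₀) - 2 · max {ℓ(x) : x ≤ σ(x) w₀}` for `O` the `σ`-conjugacy class of
`w₀`. -/
theorem statement3 {B W : Type*} [Group W] [Finite W] {M : CoxeterMatrix B}
    (cs : CoxeterSystem M W)
    (σ : W ≃* W) (hσ : ∀ w, cs.length (σ w) = cs.length w)
    (w₀ : W) (hw₀ : ∀ w, cs.length w ≤ cs.length w₀) :
    (∀ x : W, BruhatLE cs x (σ x * w₀) →
      (reflLength cs (x * w₀ * (σ x)⁻¹) : ℤ) ≤ (cs.length w₀ : ℤ) - 2 * cs.length x) ∧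
    (reflLengthSet cs {w | ∃ x : W, w = x * w₀ * (σ x)⁻¹} : ℤ) ≤
      (cs.length w₀ : ℤ) -
        2 * ((sSup {n : ℕ | ∃ x : W, BruhatLE cs x (σ x * w₀) ∧ cs.length x = n} : ℕ) : ℤ) :=
  statement3_general cs σ hσ w₀ hw₀
end

section
/- Let Φ be a finite crystallographic root system with Weyl group W₀, longest element w₀, and quantum Bruhat graph Γ_Φ. Let x, y ∈ W₀ and let λ be the total weight of any directed path from x to y in Γ_Φ of minimal length (i.e., with d_Γ(x,y) edges). Then ⟨λ, 2ρ⟩ = ℓ(x) − ℓ(y) + d_Γ(x, y), and in particular ⟨λ, ρ⟩ ≤ ℓ(w₀). -/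
/-- Data of (the positive roots and coroots of) a finite crystallographic root system
underlying its Weyl group `W`, presented as a Coxeter system `cs`.  The positive roots
`α ∈ Φ⁺` are identified with the corresponding reflections `t = s_α` of `W` (for a
crystallographic root system this correspondence is bijective, and the reflections of
the Coxeter system are exactly the reflections `s_β`, `β ∈ Φ⁺`); `coroot t` is the
coroot `α^∨` of the positive root `α` with `s_α = t`, living in the coweight lattice
`X`, and `pairRho` is the pairing `⟨·, ρ⟩` with the half-sum `ρ` of the positive roots.
For a simple root `α` one has `⟨α^∨, ρ⟩ = 1`, and `⟨α^∨, ρ⟩ > 0` for every positive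
root `α`. -/
structure QBGSetup (B W X : Type*) [Group W] [AddCommGroup X] (M : CoxeterMatrix B) where
  cs : CoxeterSystem M W
  coroot : W → X
  pairRho : X →+ ℤ
  pairRho_simple : ∀ i : B, pairRho (coroot (cs.simple i)) = 1
  pairRho_pos : ∀ t : W, cs.IsReflection t → 0 < pairRho (coroot t)

namespace QBGSetup

variable {B W X : Type*} [Group W] [AddCommGroup X] {M : CoxeterMatrix B}

/-- `Q.EdgeStep w t` says that there is an edge `w → w * t` in the quantum Bruhat graph
`Γ_Φ`: `t` is a reflection `s_α` (`α ∈ Φ⁺`) and either `ℓ(w s_α) = ℓ(w) + 1` (an upward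
edge) or `ℓ(w s_α) = ℓ(w) - ⟨α^∨, 2ρ⟩ + 1` (a downward edge). -/
def EdgeStep (Q : QBGSetup B W X M) (w t : W) : Prop :=
  Q.cs.IsReflection t ∧
    (Q.cs.length (w * t) = Q.cs.length w + 1 ∨
      (Q.cs.length (w * t) : ℤ) = (Q.cs.length w : ℤ) - 2 * Q.pairRho (Q.coroot t) + 1)

/-- `Q.IsPath x y ts` says that the list of reflections `ts` describes a directed path
from `x` to `y` in the quantum Bruhat graph `Γ_Φ`. -/
def IsPath (Q : QBGSetup B W X M) : W → W → List W → Prop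
  | x, y, [] => x = y
  | x, y, t :: ts => Q.EdgeStep x t ∧ Q.IsPath (x * t) y ts

/-- The weight of the edge `w → w * t`: `0` if it is an upward edge, and the coroot
`α^∨` (where `t = s_α`) if it is a downward edge. -/
noncomputable def stepWeight (Q : QBGSetup B W X M) (w t : W) : X :=
  if Q.cs.length (w * t) = Q.cs.length w + 1 then 0 else Q.coroot t

/-- The weight of a directed path: the sum of the weights of its edges. -/
noncomputable def pathWeight (Q : QBGSetup B W X M) : W → List W → X
  | _, [] => 0
  | w, t :: ts => Q.stepWeight w t + Q.pathWeight (w * t) ts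

/-- `d_Γ(x, y)`: the minimal number of edges in a directed path from `x` to `y` in the
quantum Bruhat graph `Γ_Φ`. -/
noncomputable def dist (Q : QBGSetup B W X M) (x y : W) : ℕ :=
  sInf {n | ∃ ts : List W, Q.IsPath x y ts ∧ ts.length = n}

theorem two_mul_pairRho_stepWeight (Q : QBGSetup B W X M) {w t : W} (h : Q.EdgeStep w t) :
    2 * Q.pairRho (Q.stepWeight w t) =
      (Q.cs.length w : ℤ) - (Q.cs.length (w * t) : ℤ) + 1 := by
  unfold stepWeight
  split_ifs with hup
  · push_cast [hup, map_zero]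
    ring
  · have hdown := h.2.resolve_left hup
    linarith

theorem two_mul_pairRho_pathWeight (Q : QBGSetup B W X M) {x y : W} {ts : List W}
    (h : Q.IsPath x y ts) :
    2 * Q.pairRho (Q.pathWeight x ts) =
      (Q.cs.length x : ℤ) - (Q.cs.length y : ℤ) + ts.length := by
  induction ts generalizing x with
  | nil =>
    subst h
    simp [pathWeight]
  | cons t ts ih =>
    obtain ⟨hstep, htail⟩ := h
    simp only [pathWeight, map_add, mul_add, List.length_cons, Nat.cast_succ,
      Q.two_mul_pairRho_stepWeight hstep, ih htail]
    ring

theorem edgeStep_simple (Q : QBGSetup B W X M) (w : W) (i : B) :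
    Q.EdgeStep w (Q.cs.simple i) := by
  refine ⟨Q.cs.isReflection_simple i, ?_⟩
  rcases Q.cs.length_mul_simple w i with h | h
  · exact Or.inl h
  · right
    rw [Q.pairRho_simple i]
    omega

theorem isPath_map_simple (Q : QBGSetup B W X M) (ω : List B) (x : W) :
    Q.IsPath x (x * Q.cs.wordProd ω) (ω.map Q.cs.simple) := by
  induction ω generalizing x with
  | nil => simp [IsPath]
  | cons i ω ih =>
    refine ⟨Q.edgeStep_simple x i, ?_⟩
    simpa only [mul_assoc, ← Q.cs.wordProd_cons] using ih (x * Q.cs.simple i)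

/-- Following a reduced word of `x⁻¹ * y` in the simple reflections is a path of upward
and downward edges. -/
theorem dist_le_length_inv_mul (Q : QBGSetup B W X M) (x y : W) :
    Q.dist x y ≤ Q.cs.length (x⁻¹ * y) := by
  obtain ⟨ω, hω, hprod⟩ := Q.cs.exists_isReduced (x⁻¹ * y)
  apply Nat.sInf_le
  refine ⟨ω.map Q.cs.simple, ?_, by rw [List.length_map, hprod, hω.eq]⟩
  simpa only [← hprod, mul_inv_cancel_left] using Q.isPath_map_simple ω x

end QBGSetup

/-- Let `Φ` be a finite crystallographic root system with Weyl group `W₀`, longest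
element `w₀`, and quantum Bruhat graph `Γ_Φ`.  Let `x, y ∈ W₀` and let `λ` be the
total weight of any directed path from `x` to `y` in `Γ_Φ` of minimal length (i.e.,
with `d_Γ(x, y)` edges).  Then `⟨λ, 2ρ⟩ = ℓ(x) - ℓ(y) + d_Γ(x, y)`, and in particular
`⟨λ, ρ⟩ ≤ ℓ(w₀)`. -/
theorem statement8 {B W X : Type*} [Group W] [AddCommGroup X]
    {M : CoxeterMatrix B} (Q : QBGSetup B W X M)
    (w₀ : W) (hw₀ : ∀ w, Q.cs.length w ≤ Q.cs.length w₀)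
    (x y : W) (ts : List W) (hpath : Q.IsPath x y ts) (hmin : ts.length = Q.dist x y) :
    2 * Q.pairRho (Q.pathWeight x ts) =
        (Q.cs.length x : ℤ) - (Q.cs.length y : ℤ) + (Q.dist x y : ℤ) ∧
      Q.pairRho (Q.pathWeight x ts) ≤ (Q.cs.length w₀ : ℤ) := by
  have hweight := Q.two_mul_pairRho_pathWeight hpath
  rw [hmin] at hweight
  refine ⟨hweight, ?_⟩
  have hdist : Q.dist x y ≤ Q.cs.length w₀ := (Q.dist_le_length_inv_mul x y).trans (hw₀ _)
  have hx := hw₀ x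
  omega
end

section
/- Let (W', S') be a finite Coxeter system with longest element w₀', let τ be a length-preserving automorphism of W', let l be a positive odd integer, and let W = (W')^l with the automorphism σ(w₁, w₂, …, w_l) = (τ(w_l), w₁, …, w_{l−1}). Let O be the σ-conjugacy class of the longest element w₀ = (w₀', …, w₀') of W, and let O' be the τ-conjugacy class of w₀' in W'. Then ℓ_R(O) = ℓ_R(O'). -/
/-- The length function of the product Coxeter system `(W')^l`: the sum of the factor
lengths. -/
noncomputable def pLen {B' W' : Type*} [Group W'] {M' : CoxeterMatrix B'}
    (cs' : CoxeterSystem M' W') (l : ℕ) (x : Fin l → W') : ℕ :=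
  ∑ i, cs'.length (x i)

/-- A reflection of the product Coxeter system `(W')^l`: a reflection of one factor,
embedded in the product. -/
def PIsReflection {B' W' : Type*} [Group W'] {M' : CoxeterMatrix B'}
    (cs' : CoxeterSystem M' W') (l : ℕ) (r : Fin l → W') : Prop :=
  ∃ (i : Fin l) (t : W'), cs'.IsReflection t ∧ r = Pi.mulSingle i t

/-- The Bruhat order of the product Coxeter system `(W')^l`: `u ≤ v` iff one can pass
from `u` to `v` by successively multiplying on the right by reflections of the product,
increasing the length at each step. -/
def PBruhatLE {B' W' : Type*} [Group W'] {M' : CoxeterMatrix B'}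
    (cs' : CoxeterSystem M' W') (l : ℕ) (u v : Fin l → W') : Prop :=
  Relation.ReflTransGen
    (fun a b => ∃ r : Fin l → W',
      PIsReflection cs' l r ∧ b = a * r ∧ pLen cs' l a < pLen cs' l b) u v

/-- The reflection length in the product Coxeter system `(W')^l`. -/
noncomputable def pReflLength {B' W' : Type*} [Group W'] {M' : CoxeterMatrix B'}
    (cs' : CoxeterSystem M' W') (l : ℕ) (w : Fin l → W') : ℕ :=
  sInf {n | ∃ L : List (Fin l → W'),
    (∀ r ∈ L, PIsReflection cs' l r) ∧ L.length = n ∧ L.prod = w}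

/-- `ℓ_R(O) = min {ℓ_R(w) : w ∈ O}` in the product Coxeter system `(W')^l`. -/
noncomputable def pReflLengthSet {B' W' : Type*} [Group W'] {M' : CoxeterMatrix B'}
    (cs' : CoxeterSystem M' W') (l : ℕ) (O : Set (Fin l → W')) : ℕ :=
  sInf (pReflLength cs' l '' O)

/-- The automorphism `σ(w₁, w₂, …, w_l) = (τ(w_l), w₁, …, w_{l-1})` of `(W')^l`
(indices in `Fin l`, with cyclic subtraction, so that entry `0` is `τ` applied to the
last entry of `x`). -/
def cyclicShift {W' : Type*} (l : ℕ) [NeZero l] (τ : W' → W') (x : Fin l → W') :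
    Fin l → W' :=
  fun i => if i = 0 then τ (x (i - 1)) else x (i - 1)

/-!
The longest element `w₀'` is an involution: the element of maximal length is unique, which
follows from the reflection cocycle (`reflCocycle w t` is `1` exactly when `t` is a right
inversion of `w`).

For `w = x w₀ σ(x)⁻¹` the coordinates satisfy `w_i = x_i w₀' x_{i-1}⁻¹` for `i > 0` and
`w_0 = x_0 w₀' τ(x_{l-1})⁻¹`, so `w_{l-1} ⋯ w_0` telescopes to `x_{l-1} w₀'^l τ(x_{l-1})⁻¹`,
an element of `O'` because `l` is odd.  Since `ℓ_R` is subadditive and the reflection length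
in `(W')^l` is the sum of the coordinate reflection lengths, `ℓ_R(O') ≤ ℓ_R(O)`.  Conversely,
`x_i = g w₀'^i` gives `x w₀ σ(x)⁻¹ = (g w₀' τ(g)⁻¹, 1, …, 1)`, so `ℓ_R(O) ≤ ℓ_R(O')`.
-/

lemma mul_mul_inv_eq_iff_eq_inv_mul_mul {G : Type*} [Group G] (a t v : G) :
    a * t * a⁻¹ = v ↔ t = a⁻¹ * v * a := by
  constructor <;> rintro rfl <;> group

lemma pow_eq_one_of_even {G : Type*} [Monoid G] {a : G} {n : ℕ} (ha : a * a = 1) (hn : Even n) :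
    a ^ n = 1 := by
  obtain ⟨k, rfl⟩ := hn
  rw [← two_mul, pow_mul, sq, ha, one_pow]

lemma Nat.sInf_image_le_of_forall_exists_le {α β : Type*} {f : α → ℕ} {g : β → ℕ}
    {s : Set α} {t : Set β} (ht : t.Nonempty) (h : ∀ b ∈ t, ∃ a ∈ s, f a ≤ g b) :
    sInf (f '' s) ≤ sInf (g '' t) := by
  obtain ⟨b, hb, hgb⟩ := Nat.sInf_mem (ht.image g)
  obtain ⟨a, ha, hab⟩ := h b hb
  exact (Nat.sInf_le (Set.mem_image_of_mem f ha)).trans (hgb ▸ hab)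

namespace CoxeterSystem

variable {B W : Type*} [Group W] {M : CoxeterMatrix B} (cs : CoxeterSystem M W)

local prefix:100 "s" => cs.simple
local prefix:100 "π" => cs.wordProd
local prefix:100 "ℓ" => cs.length

lemma simple_mul_mul_simple_eq_iff (i : B) (t v : W) :
    s i * t * s i = v ↔ t = s i * v * s i := by
  constructor <;> rintro rfl <;> simp [mul_assoc]

/- The action on `W × ZMod 2` from the standard proof of the strong exchange property. Once it
lifts to `reflRep`, `reflCocycle w t` is the parity of the number of occurrences of `t` in the
right inversion sequence of any word for `w` (`reflCocycle_wordProd`). -/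
open Classical in
noncomputable def simplePerm (i : B) : Equiv.Perm (W × ZMod 2) :=
  Function.Involutive.toPerm
    (fun p => (s i * p.1 * s i, p.2 + if p.1 = s i then 1 else 0)) <| by
    rintro ⟨t, e⟩
    have hmark : (s i * t * s i = s i) ↔ t = s i := by
      rw [simple_mul_mul_simple_eq_iff]; simp
    ext
    · simp [mul_assoc]
    · simp only [if_congr hmark rfl rfl, add_assoc, CharTwo.add_self_eq_zero, add_zero]

open Classical in
lemma simplePerm_apply (i : B) (t : W) (e : ZMod 2) :
    simplePerm cs i (t, e) = (s i * t * s i, e + if t = s i then 1 else 0) := rfl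

lemma simple_mul_pow_mul_simple (i j : B) (k : ℕ) :
    s j * (s i * s j) ^ k = (s j * s i) ^ k * s j :=
  (SemiconjBy.pow_right (by simp [SemiconjBy, mul_assoc]) k : SemiconjBy (s j) _ _).eq

lemma inv_simple_mul_simple (i j : B) : (s i * s j)⁻¹ = s j * s i := by
  simp [mul_inv_rev]

open Classical in
lemma simplePerm_mul_pow_apply (i j : B) (k : ℕ) (t : W) (e : ZMod 2) :
    ((simplePerm cs i * simplePerm cs j) ^ k) (t, e) =
      ((s i * s j) ^ k * t * ((s i * s j) ^ k)⁻¹,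
        e + ∑ q ∈ Finset.range (2 * k), if t = (s j * s i) ^ q * s j then 1 else 0) := by
  induction k with
  | zero => simp
  | succ k ih =>
    have hconj (v : W) : (s i * s j) ^ k * t * ((s i * s j) ^ k)⁻¹ = v ↔
        t = (s j * s i) ^ k * v * (s i * s j) ^ k := by
      rw [mul_mul_inv_eq_iff_eq_inv_mul_mul, ← inv_pow, inv_simple_mul_simple]
    have h₁ : (s j * s i) ^ k * s j * (s i * s j) ^ k = (s j * s i) ^ (2 * k) * s j := by
      rw [mul_assoc, simple_mul_pow_mul_simple, two_mul, pow_add, mul_assoc]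
    have h₂ : (s j * s i) ^ k * (s j * s i * s j) * (s i * s j) ^ k =
        (s j * s i) ^ (2 * k + 1) * s j := by
      rw [mul_assoc, mul_assoc, mul_assoc, simple_mul_pow_mul_simple,
        show 2 * k + 1 = k + 1 + k by ring, pow_add, pow_succ]
      simp only [mul_assoc]
    rw [pow_succ', Equiv.Perm.mul_apply, Equiv.Perm.mul_apply, ih, simplePerm_apply,
      simplePerm_apply, simple_mul_mul_simple_eq_iff, if_congr (hconj _) rfl rfl,
      if_congr (hconj _) rfl rfl, h₁, h₂, show 2 * (k + 1) = 2 * k + 1 + 1 by ring,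
      Finset.sum_range_succ, Finset.sum_range_succ]
    ext
    · simp [pow_succ', mul_assoc]
    · simp only [add_assoc]

lemma isLiftable_simplePerm : M.IsLiftable (simplePerm cs) := by
  classical
  intro i j
  ext ⟨t, e⟩ : 1
  -- the summand has period `M i j` and the sum runs over `2 * M i j` terms
  have hperiodic (q : ℕ) : (s j * s i) ^ (M i j + q) = (s j * s i) ^ q := by
    rw [pow_add, simple_mul_simple_pow', one_mul]
  rw [simplePerm_mul_pow_apply, simple_mul_simple_pow, two_mul, Finset.sum_range_add]
  simp only [hperiodic, CharTwo.add_self_eq_zero]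
  simp

noncomputable def reflRep : W →* Equiv.Perm (W × ZMod 2) :=
  cs.lift ⟨simplePerm cs, isLiftable_simplePerm cs⟩

noncomputable def reflCocycle (w t : W) : ZMod 2 := (reflRep cs w (t, 0)).2

lemma reflRep_apply (w t : W) (e : ZMod 2) :
    reflRep cs w (t, e) = (w * t * w⁻¹, e + reflCocycle cs w t) := by
  induction w using cs.simple_induction_left generalizing e with
  | one => simp [reflCocycle]
  | mul_simple_left w i ih =>
    have hs : reflRep cs (s i) = simplePerm cs i := lift_apply_simple cs _ i
    rw [reflCocycle]
    simp only [map_mul, Equiv.Perm.mul_apply, ih, hs, simplePerm_apply]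
    ext
    · simp [mul_assoc]
    · simp only [zero_add, add_assoc]

lemma reflCocycle_mul (a b t : W) :
    reflCocycle cs (a * b) t = reflCocycle cs a (b * t * b⁻¹) + reflCocycle cs b t := by
  rw [reflCocycle, map_mul, Equiv.Perm.mul_apply, reflRep_apply, reflRep_apply, zero_add,
    add_comm]

lemma reflCocycle_one (t : W) : reflCocycle cs 1 t = 0 := by
  simp [reflCocycle]

open Classical in
lemma reflCocycle_simple (i : B) (t : W) :
    reflCocycle cs (s i) t = if t = s i then 1 else 0 := by
  simp [reflCocycle, reflRep, lift_apply_simple, simplePerm_apply]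

lemma reflCocycle_inv (w t : W) : reflCocycle cs w⁻¹ (w * t * w⁻¹) = reflCocycle cs w t := by
  have h := reflCocycle_mul cs w⁻¹ w t
  rw [inv_mul_cancel, reflCocycle_one] at h
  exact CharTwo.add_eq_zero.mp h.symm

open Classical in
lemma reflCocycle_wordProd (ω : List B) (t : W) :
    reflCocycle cs (π ω) t = ((cs.rightInvSeq ω).count t : ZMod 2) := by
  induction ω with
  | nil => simp [reflCocycle_one]
  | cons i ω ih =>
    have hconj : π ω * t * (π ω)⁻¹ = s i ↔ (π ω)⁻¹ * s i * π ω = t := by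
      rw [mul_mul_inv_eq_iff_eq_inv_mul_mul, eq_comm]
    rw [wordProd_cons, reflCocycle_mul, reflCocycle_simple, ih, if_congr hconj rfl rfl]
    simp only [rightInvSeq, List.count_cons]
    by_cases h : (π ω)⁻¹ * s i * π ω = t <;> simp [h, add_comm]

open Classical in
lemma isRightInversion_of_reflCocycle_eq_one {w t : W} (h : reflCocycle cs w t = 1) :
    cs.IsRightInversion w t := by
  obtain ⟨ω, hω, rfl⟩ := cs.exists_isReduced w
  rw [reflCocycle_wordProd] at h
  refine cs.isRightInversion_of_mem_rightInvSeq hω (List.count_pos_iff.mp ?_)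
  by_contra! h0
  simp [Nat.le_zero.mp h0] at h

lemma reflCocycle_self {t : W} (ht : cs.IsReflection t) : reflCocycle cs t t = 1 := by
  obtain ⟨w, i, rfl⟩ := ht
  have hs : reflCocycle cs (s i) (s i) = 1 := by simp [reflCocycle_simple]
  have h₁ : w⁻¹ * (w * s i * w⁻¹) * w⁻¹⁻¹ = s i := by group
  have h₂ : s i * s i * (s i)⁻¹ = s i := by group
  rw [reflCocycle_mul cs (w * s i) w⁻¹, h₁, reflCocycle_mul, h₂, reflCocycle_inv, hs, add_comm,
    ← add_assoc, CharTwo.add_self_eq_zero, zero_add]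

lemma reflCocycle_eq_one_of_isRightInversion {w t : W} (h : cs.IsRightInversion w t) :
    reflCocycle cs w t = 1 := by
  -- otherwise `reflCocycle (w * t) t = 1`, so `t` would also be a right inversion of `w * t`
  by_contra hne
  have h0 : reflCocycle cs w t = 0 := by
    revert hne; generalize reflCocycle cs w t = a; revert a; decide
  have hwt : reflCocycle cs (w * t) t = 1 := by
    rw [reflCocycle_mul, mul_inv_cancel_right, h0, reflCocycle_self cs h.1, zero_add]
  have := (isRightInversion_of_reflCocycle_eq_one cs hwt).2
  rw [mul_assoc, h.1.mul_self, mul_one] at this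
  exact lt_asymm this h.2

lemma isRightInversion_of_forall_length_le {u t : W} (hu : ∀ w, ℓ w ≤ ℓ u)
    (ht : cs.IsReflection t) : cs.IsRightInversion u t :=
  ⟨ht, (hu _).lt_of_ne (ht.length_mul_left_ne u)⟩

lemma eq_of_forall_length_le {u v : W} (hu : ∀ w, ℓ w ≤ ℓ u) (hv : ∀ w, ℓ w ≤ ℓ v) :
    u = v := by
  -- at a right descent `s` of `v⁻¹ * u`, the cocycle identity for `u = v * (v⁻¹ * u)` at `s`
  -- reads `1 = 1 + 1`
  by_contra hne
  obtain ⟨i, hi⟩ := cs.exists_rightDescent_of_ne_one (w := v⁻¹ * u) (by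
    rwa [Ne, inv_mul_eq_one, eq_comm])
  have hsplit := reflCocycle_mul cs v (v⁻¹ * u) (s i)
  rw [mul_inv_cancel_left,
    reflCocycle_eq_one_of_isRightInversion cs (isRightInversion_of_forall_length_le cs hu
      (cs.isReflection_simple i)),
    reflCocycle_eq_one_of_isRightInversion cs (isRightInversion_of_forall_length_le cs hv
      ((cs.isReflection_simple i).conj _)),
    reflCocycle_eq_one_of_isRightInversion cs ⟨cs.isReflection_simple i, hi⟩] at hsplit
  revert hsplit; decide

lemma mul_self_eq_one_of_forall_length_le {u : W} (hu : ∀ w, ℓ w ≤ ℓ u) : u * u = 1 :=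
  inv_eq_iff_mul_eq_one.mp <| eq_of_forall_length_le cs (by simpa [length_inv] using hu) hu

end CoxeterSystem

section ReflectionLength

variable {B W : Type*} [Group W] {M : CoxeterMatrix B} (cs : CoxeterSystem M W)

lemma exists_list_reflLength (w : W) :
    ∃ L : List W, (∀ t ∈ L, cs.IsReflection t) ∧ L.length = reflLength cs w ∧ L.prod = w := by
  have hne :
      {n | ∃ L : List W, (∀ t ∈ L, cs.IsReflection t) ∧ L.length = n ∧ L.prod = w}.Nonempty := by
    obtain ⟨ω, rfl⟩ := cs.wordProd_surjective w
    refine ⟨ω.length, ω.map cs.simple, ?_, List.length_map _, rfl⟩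
    simp only [List.mem_map]
    rintro _ ⟨i, -, rfl⟩
    exact cs.isReflection_simple i
  exact Nat.sInf_mem hne

lemma reflLength_prod_le_length {L : List W} (hL : ∀ t ∈ L, cs.IsReflection t) :
    reflLength cs L.prod ≤ L.length :=
  Nat.sInf_le ⟨L, hL, rfl, rfl⟩

lemma reflLength_one : reflLength cs 1 = 0 :=
  Nat.le_zero.mp (reflLength_prod_le_length cs (L := []) (by simp))

lemma reflLength_le_one {t : W} (ht : cs.IsReflection t) : reflLength cs t ≤ 1 := by
  simpa using reflLength_prod_le_length cs (L := [t]) (by simpa using ht)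

lemma reflLength_mul_le (a b : W) :
    reflLength cs (a * b) ≤ reflLength cs a + reflLength cs b := by
  obtain ⟨La, hLa, ha, rfl⟩ := exists_list_reflLength cs a
  obtain ⟨Lb, hLb, hb, rfl⟩ := exists_list_reflLength cs b
  rw [← ha, ← hb, ← List.length_append, ← List.prod_append]
  exact reflLength_prod_le_length cs fun t ht => (List.mem_append.mp ht).elim (hLa t) (hLb t)

lemma reflLength_prod_le_sum (L : List W) :
    reflLength cs L.prod ≤ (L.map (reflLength cs)).sum := by
  induction L with
  | nil => simp [reflLength_one]
  | cons a L ih =>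
    rw [List.prod_cons, List.map_cons, List.sum_cons]
    exact (reflLength_mul_le cs a L.prod).trans (by omega)

end ReflectionLength

section ProductReflectionLength

variable {B W : Type*} [Group W] {M : CoxeterMatrix B} (cs : CoxeterSystem M W) {l : ℕ}

lemma sum_reflLength_mul_le (a b : Fin l → W) :
    ∑ i, reflLength cs ((a * b) i) ≤ ∑ i, reflLength cs (a i) + ∑ i, reflLength cs (b i) := by
  rw [← Finset.sum_add_distrib]
  exact Finset.sum_le_sum fun i _ => reflLength_mul_le cs (a i) (b i)

lemma sum_reflLength_mulSingle (j : Fin l) (t : W) :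
    ∑ i, reflLength cs ((Pi.mulSingle j t : Fin l → W) i) = reflLength cs t := by
  classical
  rw [Finset.sum_eq_single j (fun i _ hi => by rw [Pi.mulSingle_eq_of_ne hi, reflLength_one])
    (by simp), Pi.mulSingle_eq_same]

lemma sum_reflLength_prod_le_length {L : List (Fin l → W)}
    (hL : ∀ r ∈ L, PIsReflection cs l r) : ∑ i, reflLength cs (L.prod i) ≤ L.length := by
  induction L with
  | nil => simp [reflLength_one]
  | cons r L ih =>
    obtain ⟨j, t, ht, rfl⟩ := hL r List.mem_cons_self
    have hL' := ih fun r hr => hL r (List.mem_cons_of_mem _ hr)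
    have hr := (sum_reflLength_mulSingle cs j t).trans_le (reflLength_le_one cs ht)
    rw [List.prod_cons, List.length_cons]
    exact (sum_reflLength_mul_le cs _ _).trans (by omega)

lemma list_prod_ofFn_mulSingle {G : Type*} [Monoid G] (w : Fin l → G) :
    (List.ofFn fun i => Pi.mulSingle i (w i)).prod = w := by
  classical
  funext j
  rw [Pi.list_prod_apply, List.ofFn_eq_map, List.map_map,
    List.prod_map_eq_pow_single j _ fun i hi _ => Pi.mulSingle_eq_of_ne' hi _]
  simp [List.count_finRange]

lemma pReflLength_eq_sum (w : Fin l → W) :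
    pReflLength cs l w = ∑ i, reflLength cs (w i) := by
  choose L hL hlen hprod using fun i => exists_list_reflLength cs (w i)
  set L₀ := (List.ofFn fun i => (L i).map (Pi.mulSingle i)).flatten
  have hL₀ : ∀ r ∈ L₀, PIsReflection cs l r := by
    intro r hr
    obtain ⟨_, ⟨i, rfl⟩, hr⟩ := by simpa only [L₀, List.mem_flatten, List.mem_ofFn] using hr
    obtain ⟨t, ht, rfl⟩ := List.mem_map.mp hr
    exact ⟨i, t, hL i t ht, rfl⟩
  have hmap (i : Fin l) :
      ((L i).map (Pi.mulSingle i)).prod = (Pi.mulSingle i (w i) : Fin l → W) := by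
    rw [← hprod i]
    exact (map_list_prod (MonoidHom.mulSingle (fun _ : Fin l => W) i) (L i)).symm
  have hprod₀ : L₀.prod = w := by
    simp only [L₀, List.prod_flatten, List.map_ofFn, Function.comp_def, hmap,
      list_prod_ofFn_mulSingle]
  have hlen₀ : L₀.length = ∑ i, reflLength cs (w i) := by
    simp [L₀, List.length_flatten, List.sum_ofFn, hlen]
  have hne : {n | ∃ L : List (Fin l → W),
      (∀ r ∈ L, PIsReflection cs l r) ∧ L.length = n ∧ L.prod = w}.Nonempty :=
    ⟨_, L₀, hL₀, rfl, hprod₀⟩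
  refine le_antisymm (hlen₀ ▸ Nat.sInf_le ⟨L₀, hL₀, rfl, hprod₀⟩) ?_
  obtain ⟨L', hL', hlen', hprod'⟩ := Nat.sInf_mem hne
  calc ∑ i, reflLength cs (w i) = ∑ i, reflLength cs (L'.prod i) := by rw [hprod']
    _ ≤ L'.length := sum_reflLength_prod_le_length cs hL'
    _ = pReflLength cs l w := hlen'

end ProductReflectionLength

section CyclicShift

variable {G : Type*} [Group G]

lemma cyclicShift_succ {α : Type*} (n : ℕ) (τ : α → α) (x : Fin (n + 1) → α) :
    cyclicShift (n + 1) τ x = Fin.cons (τ (x (Fin.last n))) (Fin.init x) := by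
  funext i
  refine Fin.cases ?_ (fun j => ?_) i
  · have : (0 - 1 : Fin (n + 1)) = Fin.last n := Fin.ext (by simp)
    simp [cyclicShift, this]
  · have : (j.succ - 1 : Fin (n + 1)) = j.castSucc := Fin.ext (by simp [Fin.coe_sub_one])
    simp [cyclicShift, this, Fin.init, Fin.succ_ne_zero]

lemma list_prod_reverse_ofFn_mul_cons_init (n : ℕ) (x : Fin (n + 1) → G) (a b : G) :
    (List.ofFn (x * (fun _ => a) * (Fin.cons b (Fin.init x))⁻¹)).reverse.prod =
      x (Fin.last n) * a ^ (n + 1) * b⁻¹ := by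
  induction n with
  | zero => simp
  | succ n ih =>
    have hinit : (fun i : Fin (n + 1) =>
        (x * (fun _ => a) * (Fin.cons b (Fin.init x))⁻¹ : Fin (n + 2) → G) i.castSucc) =
          Fin.init x * (fun _ => a) * (Fin.cons b (Fin.init (Fin.init x)))⁻¹ := by
      funext i
      exact Fin.cases rfl (fun j => rfl) i
    rw [List.ofFn_succ', hinit, List.concat_eq_append, List.reverse_append, List.prod_append,
      List.reverse_singleton, List.prod_singleton, ih]
    simp only [Pi.mul_apply, Pi.inv_apply, ← Fin.succ_last, Fin.cons_succ, Fin.init]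
    group

end CyclicShift

section TwistedClass

variable {B W : Type*} [Group W] {M : CoxeterMatrix B} (cs : CoxeterSystem M W) {a : W}
  (τ : W → W) {n : ℕ}

lemma reflLength_le_pReflLength_cyclicShift (ha : a * a = 1) (hn : Even n)
    (x : Fin (n + 1) → W) :
    reflLength cs (x (Fin.last n) * a * (τ (x (Fin.last n)))⁻¹) ≤
      pReflLength cs (n + 1) (x * (fun _ => a) * (cyclicShift (n + 1) τ x)⁻¹) := by
  have htelescope :
      (List.ofFn (x * (fun _ => a) * (cyclicShift (n + 1) τ x)⁻¹)).reverse.prod =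
        x (Fin.last n) * a * (τ (x (Fin.last n)))⁻¹ := by
    rw [cyclicShift_succ, list_prod_reverse_ofFn_mul_cons_init, pow_succ,
      pow_eq_one_of_even ha hn, one_mul]
  rw [← htelescope, pReflLength_eq_sum]
  refine (reflLength_prod_le_sum cs _).trans_eq ?_
  rw [List.map_reverse, List.sum_reverse, List.map_ofFn, List.sum_ofFn]
  rfl

lemma mul_const_mul_cyclicShift_inv_eq_mulSingle (ha : a * a = 1) (hn : Even n) (g : W) :
    (fun i : Fin (n + 1) => g * a ^ (i : ℕ)) * (fun _ => a) *
        (cyclicShift (n + 1) τ fun i => g * a ^ (i : ℕ))⁻¹ =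
      Pi.mulSingle 0 (g * a * (τ g)⁻¹) := by
  rw [cyclicShift_succ]
  funext i
  refine Fin.cases ?_ (fun j => ?_) i
  · simp [pow_eq_one_of_even ha hn]
  · simp only [Pi.mul_apply, Pi.inv_apply, Fin.cons_succ, Fin.init, Fin.val_succ,
      Fin.val_castSucc, Pi.mulSingle_eq_of_ne (Fin.succ_ne_zero j)]
    rw [pow_succ, mul_assoc g, mul_assoc (a ^ _), ha, mul_one, mul_inv_cancel]

theorem pReflLengthSet_cyclicShift_class_eq (ha : a * a = 1) (hn : Even n) :
    pReflLengthSet cs (n + 1)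
        {w | ∃ x : Fin (n + 1) → W, w = x * (fun _ => a) * (cyclicShift (n + 1) τ x)⁻¹} =
      reflLengthSet cs {w | ∃ g : W, w = g * a * (τ g)⁻¹} := by
  refine le_antisymm (Nat.sInf_image_le_of_forall_exists_le ⟨_, 1, rfl⟩ ?_)
    (Nat.sInf_image_le_of_forall_exists_le ⟨_, 1, rfl⟩ ?_)
  · rintro _ ⟨g, rfl⟩
    refine ⟨_, ⟨fun i => g * a ^ (i : ℕ), rfl⟩, ?_⟩
    rw [mul_const_mul_cyclicShift_inv_eq_mulSingle τ ha hn, pReflLength_eq_sum,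
      sum_reflLength_mulSingle]
  · rintro _ ⟨x, rfl⟩
    exact ⟨_, ⟨x (Fin.last n), rfl⟩, reflLength_le_pReflLength_cyclicShift cs τ ha hn x⟩

end TwistedClass

theorem statement12_general {B' W' : Type*} [Group W'] {M' : CoxeterMatrix B'}
    (cs' : CoxeterSystem M' W')
    (w₀' : W') (hw₀' : ∀ w, cs'.length w ≤ cs'.length w₀')
    (τ : W' ≃* W')
    (l : ℕ) [NeZero l] (hl : Odd l) :
    pReflLengthSet cs' l
        {w | ∃ x : Fin l → W', w = x * (fun _ => w₀') * (cyclicShift l (⇑τ) x)⁻¹} =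
      reflLengthSet cs' {w | ∃ g : W', w = g * w₀' * (τ g)⁻¹} := by
  obtain ⟨m, rfl⟩ := hl
  exact pReflLengthSet_cyclicShift_class_eq cs' τ (cs'.mul_self_eq_one_of_forall_length_le hw₀')
    (even_two_mul m)

/-- Let `(W', S')` be a finite Coxeter system with longest element `w₀'`, `τ` a
length-preserving automorphism of `W'`, `l` a positive odd integer, and `W = (W')^l`
with the automorphism `σ(w₁, …, w_l) = (τ(w_l), w₁, …, w_{l-1})`.  Let `O` be the
`σ`-conjugacy class of `w₀ = (w₀', …, w₀')` in `W` and `O'` the `τ`-conjugacy class of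
`w₀'` in `W'`.  Then `ℓ_R(O) = ℓ_R(O')`. -/
theorem statement12 {B' W' : Type*} [Group W'] [Finite W'] {M' : CoxeterMatrix B'}
    (cs' : CoxeterSystem M' W')
    (w₀' : W') (hw₀' : ∀ w, cs'.length w ≤ cs'.length w₀')
    (τ : W' ≃* W') (hτ : ∀ w, cs'.length (τ w) = cs'.length w)
    (l : ℕ) [NeZero l] (hl : Odd l) :
    pReflLengthSet cs' l
        {w | ∃ x : Fin l → W', w = x * (fun _ => w₀') * (cyclicShift l (⇑τ) x)⁻¹} =
      reflLengthSet cs' {w | ∃ g : W', w = g * w₀' * (τ g)⁻¹} :=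
  statement12_general cs' w₀' hw₀' τ l hl
end

section
/- Let n ≥ 1 and let W = S_{n+1} be the symmetric group on {1, …, n+1} with its Coxeter system given by the adjacent transpositions s_i = (i, i+1), Coxeter length ℓ (the number of inversions), Bruhat order ≤, and longest element w₀ the order-reversing permutation i ↦ n+2−i. Then max{ℓ(x) : x ∈ S_{n+1}, x ≤ x w₀} = ⌊n²/4⌋. -/
/-!
If `x ≤ x w₀`, a Bruhat chain of `k` reflections from `x` to `x w₀` raises the length by at
least `k`, and `ℓ(x w₀) = n(n+1)/2 - ℓ(x)`, so `2ℓ(x) + k ≤ n(n+1)/2`. The reflections are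
transpositions whose product `w₀` moves at least `n` points, so `2k ≥ n` and `ℓ(x) ≤ ⌊n²/4⌋`.

Equality holds for `x = 0 2 4 ⋯ 5 3 1`: multiplying on the left by the pairwise commuting
simple reflections `s_{2j}` (which swap the values `2j` and `2j+1`, standing at positions
`j < n - j`) carries `x` to `x w₀` in `⌈n/2⌉` steps, each raising the length by exactly one.
-/

open Equiv Finset

lemma Fin.card_filter_fst_lt_snd (N : ℕ) :
    #{p : Fin N × Fin N | p.1 < p.2} * 2 = N * (N - 1) := by
  have : #{p : Fin N × Fin N | p.1 < p.2} = ∑ b : Fin N, (b : ℕ) := by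
    rw [card_filter, Fintype.sum_prod_type_right]
    refine sum_congr rfl fun b _ => ?_
    rw [← card_filter, ← Fin.card_Iio, ← filter_gt_eq_Iio]
  rw [this, Fin.sum_univ_eq_sum_range (fun i => i) N, sum_range_id_mul_two]

lemma Fin.le_card_support_revPerm (n : ℕ) :
    n ≤ #(Fin.revPerm : Perm (Fin (n + 1))).support := by
  have hfix : #(Fin.revPerm : Perm (Fin (n + 1))).supportᶜ ≤ 1 := by
    refine card_le_one.2 fun a ha b hb => ?_
    simp only [mem_compl, Perm.notMem_support, Fin.revPerm_apply, Fin.ext_iff, Fin.val_rev]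
      at ha hb
    omega
  have := card_add_card_compl (Fin.revPerm : Perm (Fin (n + 1))).support
  rw [Fintype.card_fin] at this
  omega

namespace Equiv.Perm

lemma card_support_list_prod_le_of_isSwap {α : Type*} [DecidableEq α] [Fintype α]
    (l : List (Perm α)) (hl : ∀ t ∈ l, t.IsSwap) : #l.prod.support ≤ 2 * l.length := by
  induction l with
  | nil => simp
  | cons t l ih =>
    have ht := card_support_eq_two.2 (hl t List.mem_cons_self)
    have := ih fun u hu => hl u (List.mem_cons_of_mem t hu)
    calc #(t * l.prod).support ≤ #(t.support ∪ l.prod.support) :=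
          card_le_card (support_mul_le t l.prod)
      _ ≤ #t.support + #l.prod.support := card_union_le _ _
      _ ≤ 2 * (t :: l).length := by rw [List.length_cons]; omega

variable {N : ℕ}

def inversions (w : Perm (Fin N)) : Finset (Fin N × Fin N) :=
  {p | p.1 < p.2 ∧ w p.2 < w p.1}

def numInversions (w : Perm (Fin N)) : ℕ := #w.inversions

@[simp] lemma mem_inversions {w : Perm (Fin N)} {p : Fin N × Fin N} :
    p ∈ w.inversions ↔ p.1 < p.2 ∧ w p.2 < w p.1 := by
  simp [inversions]

@[simp] lemma numInversions_one : numInversions (1 : Perm (Fin N)) = 0 := by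
  simp only [numInversions, card_eq_zero, eq_empty_iff_forall_notMem, mem_inversions,
    one_apply, not_and, not_lt]
  exact fun _ h => h.le

lemma swap_castSucc_succ_apply_lt_of_ne {n : ℕ} (i : Fin n) {p : Fin (n + 1) × Fin (n + 1)}
    (hp : p.1 < p.2) (hne : p ≠ (i.castSucc, i.succ)) :
    swap i.castSucc i.succ p.1 < swap i.castSucc i.succ p.2 ∧
      (swap i.castSucc i.succ p.1, swap i.castSucc i.succ p.2) ≠ (i.castSucc, i.succ) := by
  obtain ⟨a, b⟩ := p
  simp only [ne_eq, Prod.mk.injEq, swap_apply_def, Fin.lt_def, Fin.ext_iff] at *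
  split_ifs <;> simp only [Fin.val_castSucc, Fin.val_succ] at * <;> omega

lemma numInversions_mul_swap_of_lt {n : ℕ} {w : Perm (Fin (n + 1))} {i : Fin n}
    (h : w i.castSucc < w i.succ) :
    (w * swap i.castSucc i.succ).numInversions = w.numInversions + 1 := by
  set s := swap i.castSucc i.succ
  have hmem : (i.castSucc, i.succ) ∈ (w * s).inversions :=
    mem_inversions.2 ⟨Fin.castSucc_lt_succ, by simpa [s] using h⟩
  have hnot : (i.castSucc, i.succ) ∉ w.inversions := by simp [h.le]
  -- apart from `(i, i+1)`, the inversions of `w * s` and of `w` correspond under `s × s`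
  have hmaps : ∀ v : Perm (Fin (n + 1)), Set.MapsTo (fun p : Fin (n + 1) × Fin (n + 1) => (s p.1, s p.2))
      (v.inversions.erase (i.castSucc, i.succ)) ((v * s).inversions.erase (i.castSucc, i.succ)) := by
    intro v p hp
    simp only [coe_erase, Set.mem_sdiff, mem_coe, mem_inversions, Set.mem_singleton_iff] at hp ⊢
    obtain ⟨hlt, hne⟩ := swap_castSucc_succ_apply_lt_of_ne i hp.1.1 hp.2
    exact ⟨⟨hlt, by simpa [s] using hp.1.2⟩, hne⟩
  rw [numInversions, ← card_erase_add_one hmem, numInversions, ← erase_eq_of_notMem hnot]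
  congr 1
  refine card_nbij' _ _ (by simpa [s, mul_assoc] using hmaps (w * s)) (hmaps w) ?_ ?_ <;>
    intro p _ <;> simp [s]

lemma numInversions_mul_swap_of_gt {n : ℕ} {w : Perm (Fin (n + 1))} {i : Fin n}
    (h : w i.succ < w i.castSucc) :
    (w * swap i.castSucc i.succ).numInversions + 1 = w.numInversions := by
  simpa [mul_assoc] using
    (numInversions_mul_swap_of_lt (w := w * swap i.castSucc i.succ) (i := i) (by simpa using h)).symm

lemma exists_succ_lt_castSucc {n : ℕ} {w : Perm (Fin (n + 1))} (hw : w ≠ 1) :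
    ∃ i : Fin n, w i.succ < w i.castSucc := by
  by_contra! h
  refine hw (Equiv.ext fun x => congrFun (StrictMono.eq_id ?_) x)
  exact Fin.strictMono_iff_lt_succ.2 fun i =>
    (h i).lt_of_ne (w.injective.ne Fin.castSucc_lt_succ.ne)

lemma numInversions_mul_revPerm_add (w : Perm (Fin N)) :
    (w * Fin.revPerm).numInversions + w.numInversions = #{p : Fin N × Fin N | p.1 < p.2} := by
  have hsub : w.inversions ⊆ ({p | p.1 < p.2} : Finset (Fin N × Fin N)) := fun p hp => by
    simp only [mem_inversions] at hp
    simpa using hp.1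
  rw [← card_sdiff_add_card_eq_card hsub, numInversions, numInversions]
  congr 1
  refine card_nbij' (fun p => (p.2.rev, p.1.rev)) (fun p => (p.2.rev, p.1.rev)) ?_ ?_ ?_ ?_
  · rintro ⟨a, b⟩ hp
    simp only [coe_sdiff, Set.mem_sdiff, mem_coe, mem_inversions, mem_filter, mem_univ, true_and,
      Perm.mul_apply, Fin.revPerm_apply, Fin.rev_lt_rev, not_and, not_lt] at hp ⊢
    exact ⟨hp.1, fun _ => hp.2.le⟩
  · rintro ⟨a, b⟩ hp
    simp only [coe_sdiff, Set.mem_sdiff, mem_coe, mem_inversions, mem_filter, mem_univ, true_and,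
      Perm.mul_apply, Fin.revPerm_apply, Fin.rev_lt_rev, Fin.rev_rev, not_and, not_lt] at hp ⊢
    exact ⟨hp.1, (hp.2 hp.1).lt_of_ne (w.injective.ne hp.1.ne)⟩
  all_goals intro p _; simp

end Equiv.Perm

section Bruhat

variable {B W : Type*} [Group W] {M : CoxeterMatrix B} {cs : CoxeterSystem M W}

lemma BruhatLE.exists_reflections {u v : W} (h : BruhatLE cs u v) :
    ∃ l : List W, (∀ t ∈ l, cs.IsReflection t) ∧ v = u * l.prod ∧
      cs.length u + l.length ≤ cs.length v := by
  induction h with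
  | refl => exact ⟨[], by simp, by simp, by simp⟩
  | tail _ hstep ih =>
    obtain ⟨l, hl, rfl, hlen⟩ := ih
    obtain ⟨t, ht, rfl, hlt⟩ := hstep
    refine ⟨l ++ [t], ?_, by simp [mul_assoc], ?_⟩
    · simpa [or_imp, forall_and] using ⟨hl, ht⟩
    · rw [List.length_append, List.length_singleton]; omega

lemma BruhatLE.simple_mul {u w : W} {i : B} (h : BruhatLE cs u w)
    (hlt : cs.length w < cs.length (cs.simple i * w)) : BruhatLE cs u (cs.simple i * w) := by
  refine h.tail ⟨w⁻¹ * cs.simple i * w, ?_, by group, hlt⟩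
  simpa using (cs.isReflection_simple i).conj w⁻¹

end Bruhat

/-- In one-line notation `0 2 4 ⋯ 5 3 1`. -/
def evenOddPerm (n : ℕ) : Perm (Fin (n + 1)) where
  toFun i := ⟨if 2 * i.val ≤ n then 2 * i.val else 2 * (n - i.val) + 1, by split_ifs <;> omega⟩
  invFun v := ⟨if v.val % 2 = 0 then v.val / 2 else n - v.val / 2, by split_ifs <;> omega⟩
  left_inv i := by ext; simp only; split_ifs <;> omega
  right_inv v := by ext; simp only; split_ifs <;> omega

lemma evenOddPerm_apply_val (n : ℕ) (i : Fin (n + 1)) :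
    (evenOddPerm n i).val = if 2 * i.val ≤ n then 2 * i.val else 2 * (n - i.val) + 1 := rfl

/-- The product of the transpositions `(2k, 2k+1)` over `k < j` with `2k + 1 ≤ n`. -/
def pairSwap (n j : ℕ) : Perm (Fin (n + 1)) :=
  Function.Involutive.toPerm
    (fun v => ⟨if v.val % 2 = 0 ∧ v.val < 2 * j ∧ v.val < n then v.val + 1
      else if v.val % 2 = 1 ∧ v.val < 2 * j then v.val - 1 else v.val, by split_ifs <;> omega⟩)
    (fun v => by ext; simp only; split_ifs <;> omega)

lemma pairSwap_apply_val (n j : ℕ) (v : Fin (n + 1)) :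
    (pairSwap n j v).val = if v.val % 2 = 0 ∧ v.val < 2 * j ∧ v.val < n then v.val + 1
      else if v.val % 2 = 1 ∧ v.val < 2 * j then v.val - 1 else v.val := rfl

@[simp] lemma pairSwap_zero (n : ℕ) : pairSwap n 0 = 1 := by
  ext v; rw [pairSwap_apply_val]; simp

lemma pairSwap_succ {n j : ℕ} (hj : 2 * j < n) :
    pairSwap n (j + 1) =
      swap (Fin.castSucc ⟨2 * j, hj⟩) (Fin.succ ⟨2 * j, hj⟩) * pairSwap n j := by
  ext v
  have h := pairSwap_apply_val n j v
  rw [pairSwap_apply_val, Perm.mul_apply, swap_apply_def]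
  generalize pairSwap n j v = u at h
  split_ifs at * <;> simp only [Fin.ext_iff, Fin.val_castSucc, Fin.val_succ] at * <;> omega

lemma pairSwap_apply_of_le {n j : ℕ} {v : Fin (n + 1)} (hv : 2 * j ≤ v.val) :
    pairSwap n j v = v := by
  ext; rw [pairSwap_apply_val]; split_ifs <;> omega

lemma pairSwap_mul_evenOddPerm (n : ℕ) :
    pairSwap n ((n + 1) / 2) * evenOddPerm n = evenOddPerm n * Fin.revPerm := by
  ext i
  simp only [Perm.mul_apply, pairSwap_apply_val, evenOddPerm_apply_val, Fin.revPerm_apply,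
    Fin.val_rev]
  split_ifs <;> omega

namespace CoxeterSystem

open Perm

variable {n : ℕ} (cs : CoxeterSystem (CoxeterMatrix.A n) (Perm (Fin (n + 1))))

lemma numInversions_wordProd_le (hsimple : ∀ i : Fin n, cs.simple i = swap i.castSucc i.succ)
    (ω : List (Fin n)) : (cs.wordProd ω).numInversions ≤ ω.length := by
  induction ω using List.reverseRecOn with
  | nil => simp
  | append_singleton ω i ih =>
    rw [wordProd_append, wordProd_singleton, hsimple, List.length_append, List.length_singleton]
    rcases lt_or_gt_of_ne ((cs.wordProd ω).injective.ne (Fin.castSucc_lt_succ (i := i)).ne)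
      with h | h
    · rw [numInversions_mul_swap_of_lt h]; omega
    · have := numInversions_mul_swap_of_gt h; omega

lemma length_le_numInversions (hsimple : ∀ i : Fin n, cs.simple i = swap i.castSucc i.succ)
    (w : Perm (Fin (n + 1))) : cs.length w ≤ w.numInversions := by
  induction hm : w.numInversions using Nat.strong_induction_on generalizing w with
  | _ m ih =>
    obtain rfl | hw := eq_or_ne w 1
    · simp
    obtain ⟨i, hi⟩ := exists_succ_lt_castSucc hw
    have hdrop := numInversions_mul_swap_of_gt hi
    have hle := cs.length_mul_le (w * swap i.castSucc i.succ) (cs.simple i)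
    have hs := cs.length_simple i
    rw [hsimple, mul_swap_mul_self] at hle
    rw [hsimple] at hs
    have := ih _ (by omega) (w * swap i.castSucc i.succ) rfl
    omega

lemma length_eq_numInversions (hsimple : ∀ i : Fin n, cs.simple i = swap i.castSucc i.succ)
    (w : Perm (Fin (n + 1))) : cs.length w = w.numInversions := by
  refine (cs.length_le_numInversions hsimple w).antisymm ?_
  obtain ⟨ω, hω, rfl⟩ := cs.exists_isReduced w
  exact hω ▸ cs.numInversions_wordProd_le hsimple ω

lemma isSwap_of_isReflection (hsimple : ∀ i : Fin n, cs.simple i = swap i.castSucc i.succ)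
    {t : Perm (Fin (n + 1))} (ht : cs.IsReflection t) : t.IsSwap := by
  obtain ⟨w, i, rfl⟩ := ht
  rw [hsimple, ← swap_apply_apply]
  exact ⟨_, _, w.injective.ne Fin.castSucc_lt_succ.ne, rfl⟩

lemma length_mul_revPerm_add (hsimple : ∀ i : Fin n, cs.simple i = swap i.castSucc i.succ)
    (w : Perm (Fin (n + 1))) :
    2 * (cs.length (w * Fin.revPerm) + cs.length w) = n * (n + 1) := by
  rw [cs.length_eq_numInversions hsimple, cs.length_eq_numInversions hsimple,
    numInversions_mul_revPerm_add, mul_comm, Fin.card_filter_fst_lt_snd, Nat.add_sub_cancel,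
    mul_comm]

lemma length_le_of_bruhatLE_mul_revPerm
    (hsimple : ∀ i : Fin n, cs.simple i = swap i.castSucc i.succ) {x : Perm (Fin (n + 1))}
    (hx : BruhatLE cs x (x * Fin.revPerm)) : cs.length x ≤ n ^ 2 / 4 := by
  obtain ⟨l, hl, hprod, hlen⟩ := hx.exists_reflections
  have hsupp := card_support_list_prod_le_of_isSwap l fun t ht =>
    cs.isSwap_of_isReflection hsimple (hl t ht)
  rw [← mul_left_cancel hprod] at hsupp
  have := Fin.le_card_support_revPerm n
  have := cs.length_mul_revPerm_add hsimple x
  rw [Nat.le_div_iff_mul_le four_pos]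
  nlinarith

lemma length_simple_mul_of_lt (hsimple : ∀ i : Fin n, cs.simple i = swap i.castSucc i.succ)
    {w : Perm (Fin (n + 1))} {a b : Fin (n + 1)} {i : Fin n} (hab : a < b)
    (ha : w a = i.castSucc) (hb : w b = i.succ) :
    cs.length (cs.simple i * w) = cs.length w + 1 := by
  have hlt : w⁻¹ i.castSucc < w⁻¹ i.succ := by
    rw [← ha, ← hb]
    simpa using hab
  calc cs.length (cs.simple i * w) = cs.length (w⁻¹ * cs.simple i) := by
        rw [← length_inv, mul_inv_rev, inv_simple]
    _ = cs.length w⁻¹ + 1 := by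
        rw [hsimple, cs.length_eq_numInversions hsimple, cs.length_eq_numInversions hsimple,
          numInversions_mul_swap_of_lt hlt]
    _ = cs.length w + 1 := by rw [length_inv]

lemma bruhatLE_pairSwap_mul_evenOddPerm
    (hsimple : ∀ i : Fin n, cs.simple i = swap i.castSucc i.succ) :
    ∀ j ≤ (n + 1) / 2, BruhatLE cs (evenOddPerm n) (pairSwap n j * evenOddPerm n) ∧
      cs.length (pairSwap n j * evenOddPerm n) = cs.length (evenOddPerm n) + j
  | 0, _ => by
    rw [pairSwap_zero, one_mul]
    exact ⟨Relation.ReflTransGen.refl, rfl⟩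
  | j + 1, hj => by
    obtain ⟨hle, hlen⟩ := bruhatLE_pairSwap_mul_evenOddPerm hsimple j (by omega)
    have h2j : 2 * j < n := by omega
    have ha : evenOddPerm n ⟨j, by omega⟩ = Fin.castSucc ⟨2 * j, h2j⟩ :=
      Fin.ext <| by simp only [evenOddPerm_apply_val, Fin.val_castSucc]; split_ifs <;> omega
    have hb : evenOddPerm n ⟨n - j, by omega⟩ = Fin.succ ⟨2 * j, h2j⟩ :=
      Fin.ext <| by simp only [evenOddPerm_apply_val, Fin.val_succ]; split_ifs <;> omega
    have hstep := cs.length_simple_mul_of_lt hsimple (w := pairSwap n j * evenOddPerm n)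
      (Fin.mk_lt_mk.2 (by omega : j < n - j))
      (by rw [Perm.mul_apply, ha, pairSwap_apply_of_le (by simp)])
      (by rw [Perm.mul_apply, hb, pairSwap_apply_of_le (by simp)])
    rw [pairSwap_succ h2j, mul_assoc, ← hsimple]
    exact ⟨hle.simple_mul (by omega), by omega⟩

lemma length_evenOddPerm (hsimple : ∀ i : Fin n, cs.simple i = swap i.castSucc i.succ) :
    cs.length (evenOddPerm n) = n ^ 2 / 4 := by
  have hsum := cs.length_mul_revPerm_add hsimple (evenOddPerm n)
  rw [← pairSwap_mul_evenOddPerm, (cs.bruhatLE_pairSwap_mul_evenOddPerm hsimple _ le_rfl).2]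
    at hsum
  obtain ⟨c, rfl | rfl⟩ := Nat.even_or_odd' n
  · rw [show (2 * c + 1) / 2 = c by omega] at hsum
    have : cs.length (evenOddPerm (2 * c)) = c * c := by nlinarith
    rw [this, show (2 * c) ^ 2 = 4 * (c * c) by ring]
    omega
  · rw [show (2 * c + 1 + 1) / 2 = c + 1 by omega] at hsum
    have : cs.length (evenOddPerm (2 * c + 1)) = c * c + c := by nlinarith
    rw [this, show (2 * c + 1) ^ 2 = 4 * (c * c + c) + 1 by ring]
    omega

end CoxeterSystem

theorem statement13_general (n : ℕ)
    (cs : CoxeterSystem (CoxeterMatrix.Aₙ n) (Equiv.Perm (Fin (n + 1))))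
    (hsimple : ∀ i : Fin n, cs.simple i = Equiv.swap i.castSucc i.succ) :
    sSup {m : ℕ | ∃ x : Equiv.Perm (Fin (n + 1)),
        BruhatLE cs x (x * Fin.revPerm) ∧ cs.length x = m} = n ^ 2 / 4 := by
  refine IsGreatest.csSup_eq ⟨⟨evenOddPerm n, ?_, cs.length_evenOddPerm hsimple⟩, ?_⟩
  · rw [← pairSwap_mul_evenOddPerm]
    exact (cs.bruhatLE_pairSwap_mul_evenOddPerm hsimple _ le_rfl).1
  · rintro _ ⟨x, hx, rfl⟩
    exact cs.length_le_of_bruhatLE_mul_revPerm hsimple hx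

/-- Let `n ≥ 1` and let `W = S_{n+1}` be the symmetric group with its Coxeter system of
type `Aₙ` given by the adjacent transpositions `sᵢ = (i, i+1)`, with Bruhat order `≤`
and longest element `w₀` the order-reversing permutation.  Then
`max {ℓ(x) : x ∈ S_{n+1}, x ≤ x w₀} = ⌊n² / 4⌋`. -/
theorem statement13 (n : ℕ) (hn : 1 ≤ n)
    (cs : CoxeterSystem (CoxeterMatrix.Aₙ n) (Equiv.Perm (Fin (n + 1))))
    (hsimple : ∀ i : Fin n, cs.simple i = Equiv.swap i.castSucc i.succ) :
    sSup {m : ℕ | ∃ x : Equiv.Perm (Fin (n + 1)),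
        BruhatLE cs x (x * Fin.revPerm) ∧ cs.length x = m} = n ^ 2 / 4 :=
  statement13_general n cs hsimple
end

section
/- Let m ≥ 2 and let (W, {s₁, s₂}) be the finite dihedral Coxeter system of type I₂(m), with Bruhat order ≤, length function ℓ, and longest element w₀ of length m. Then max{ℓ(x) : x ∈ W, x ≤ x w₀} = ⌈m/2⌉ − 1. -/
/-!
Reduced words in a rank-two Coxeter system alternate, so every element of odd length is a
reflection. Consequently `u ≤ v` in Bruhat order as soon as `ℓ u < ℓ v`: one reflection suffices
when the lengths have opposite parity, and otherwise one passes through an element of length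
`ℓ u + 1`. Moreover `w₀` is the product of either alternating word of length `m`, so one of them
starts with a reduced word of `x⁻¹`, which gives `ℓ (x * w₀) = m - ℓ x`. Hence `x ≤ x * w₀` holds
exactly when `ℓ x < m - ℓ x`.
-/

namespace CoxeterSystem

open List

theorem alternatingWord_add {B : Type*} (i i' : B) (k n : ℕ) :
    alternatingWord i i' (k + n) =
      (if Even n then alternatingWord i i' k else alternatingWord i' i k) ++
        alternatingWord i i' n := by
  induction n generalizing i i' with
  | zero => simp [alternatingWord]
  | succ n ih =>
    rw [← add_assoc, alternatingWord_succ, ih, alternatingWord_succ i i' n]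
    by_cases hn : Even n <;> simp [hn, Nat.even_add_one]

section General

variable {B W : Type*} [Group W] {M : CoxeterMatrix B} (cs : CoxeterSystem M W)

local prefix:100 "π" => cs.wordProd
local prefix:100 "ℓ" => cs.length

theorem isChain_ne_of_isReduced : ∀ {ω : List B}, cs.IsReduced ω → ω.IsChain (· ≠ ·)
  | [], _ => isChain_nil
  | [_], _ => isChain_singleton _
  | i :: j :: ω, h => by
    refine isChain_cons_cons.mpr ⟨?_, isChain_ne_of_isReduced (by simpa using h.drop 1)⟩
    rintro rfl
    have hcancel : π (i :: i :: ω) = π ω := by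
      rw [wordProd_cons, wordProd_cons, ← mul_assoc, simple_mul_simple_self, one_mul]
    have hle : (i :: i :: ω).length ≤ ω.length := h.eq ▸ hcancel ▸ cs.length_wordProd_le ω
    simp at hle

theorem isReflection_wordProd_alternatingWord (i i' : B) :
    ∀ j : ℕ, cs.IsReflection (π (alternatingWord i i' (2 * j + 1)))
  | 0 => by simpa [alternatingWord] using cs.isReflection_simple i'
  | j + 1 => by
    -- the word is `i' :: alternatingWord i' i (2 * j + 1) ++ [i']`, a conjugate by `s i'`
    rw [show 2 * (j + 1) + 1 = 2 * j + 1 + 1 + 1 by ring, alternatingWord_succ,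
      alternatingWord_succ', if_neg (Nat.not_even_two_mul_add_one j), concat_eq_append,
      wordProd_append, wordProd_cons, wordProd_singleton]
    simpa [mul_assoc] using
      (isReflection_wordProd_alternatingWord i' i j).conj (cs.simple i')

theorem exists_length_eq_of_le {w : W} {k : ℕ} (hk : k ≤ ℓ w) : ∃ x : W, ℓ x = k := by
  obtain ⟨ω, hω, rfl⟩ := cs.exists_isReduced w
  refine ⟨π (ω.take k), ?_⟩
  rw [(hω.take k).eq, length_take, ← hω.eq]
  omega

theorem bruhatLE_of_isReflection {u v : W} (ht : cs.IsReflection (u⁻¹ * v))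
    (hlt : ℓ u < ℓ v) : BruhatLE cs u v :=
  .single ⟨u⁻¹ * v, ht, by group, hlt⟩

variable {cs} in
theorem _root_.BruhatLE.eq_or_length_lt {u v : W} (h : BruhatLE cs u v) : u = v ∨ ℓ u < ℓ v := by
  induction h with
  | refl => exact .inl rfl
  | tail _ hstep ih =>
    obtain ⟨_, _, _, hlt⟩ := hstep
    exact .inr (ih.elim (· ▸ hlt) (·.trans hlt))

end General

section RankTwo

variable {W : Type*} [Group W] {M : CoxeterMatrix (Fin 2)} (cs : CoxeterSystem M W)

local prefix:100 "π" => cs.wordProd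
local prefix:100 "ℓ" => cs.length

theorem _root_.CoxeterMatrix.apply_eq_apply_zero_one_of_ne {M : CoxeterMatrix (Fin 2)}
    {i i' : Fin 2} (h : i ≠ i') : M i i' = M 0 1 := by
  fin_cases i <;> fin_cases i' <;> simp_all [M.symmetric 1 0]

theorem eq_alternatingWord_of_isChain_ne :
    ∀ {ω : List (Fin 2)}, ω.IsChain (· ≠ ·) →
      ∃ i i' : Fin 2, i ≠ i' ∧ ω = alternatingWord i i' ω.length
  | [], _ => ⟨0, 1, by decide, rfl⟩
  | [a], _ => ⟨a + 1, a, by fin_cases a <;> decide, rfl⟩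
  | a :: b :: ω, h => by
    obtain ⟨hab, htail⟩ := isChain_cons_cons.mp h
    obtain ⟨i, i', hii', heq⟩ := eq_alternatingWord_of_isChain_ne htail
    have hb : b = if Even ω.length then i' else i := by
      rw [length_cons, alternatingWord_succ'] at heq
      exact (cons_eq_cons.mp heq).1
    refine ⟨i, i', hii', ?_⟩
    rw [length_cons, alternatingWord_succ', ← heq, length_cons]
    congr 1
    have other : ∀ a b c : Fin 2, a ≠ b → c ≠ b → a = c := by decide
    by_cases he : Even ω.length
    · rw [if_neg (by simpa [Nat.even_add_one] using he)]
      rw [if_pos he] at hb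
      exact other a i' i (hb ▸ hab) hii'
    · rw [if_pos (by simpa [Nat.even_add_one] using he)]
      rw [if_neg he] at hb
      exact other a i i' (hb ▸ hab) hii'.symm

theorem exists_eq_wordProd_alternatingWord (w : W) :
    ∃ i i' : Fin 2, i ≠ i' ∧ w = π (alternatingWord i i' (ℓ w)) := by
  obtain ⟨ω, hω, rfl⟩ := cs.exists_isReduced w
  obtain ⟨i, i', hii', heq⟩ := eq_alternatingWord_of_isChain_ne (cs.isChain_ne_of_isReduced hω)
  exact ⟨i, i', hii', by rw [hω.eq, ← heq]⟩

theorem isReflection_of_odd_length {w : W} (hw : Odd (ℓ w)) : cs.IsReflection w := by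
  obtain ⟨i, i', -, hw_eq⟩ := cs.exists_eq_wordProd_alternatingWord w
  obtain ⟨j, hj⟩ := hw
  rw [hw_eq, hj]
  exact cs.isReflection_wordProd_alternatingWord i i' j

theorem bruhatLE_of_length_lt_of_odd {u v : W} (hlt : ℓ u < ℓ v) (hodd : Odd (ℓ u + ℓ v)) :
    BruhatLE cs u v := by
  refine cs.bruhatLE_of_isReflection (cs.isReflection_of_odd_length ?_) hlt
  rw [Nat.odd_iff, cs.length_mul_mod_two, cs.length_inv, ← Nat.odd_iff]
  exact hodd

theorem bruhatLE_of_length_lt {u v : W} (hlt : ℓ u < ℓ v) : BruhatLE cs u v := by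
  by_cases hodd : Odd (ℓ u + ℓ v)
  · exact cs.bruhatLE_of_length_lt_of_odd hlt hodd
  obtain ⟨c, hc⟩ := cs.exists_length_eq_of_le (w := v) (k := ℓ u + 1) hlt
  rw [Nat.not_odd_iff_even, Nat.even_iff] at hodd
  have hcv : ℓ c < ℓ v := by omega
  refine .trans (cs.bruhatLE_of_length_lt_of_odd (by omega) ⟨ℓ u, by omega⟩)
    (cs.bruhatLE_of_length_lt_of_odd hcv (by rw [Nat.odd_iff]; omega))

theorem length_le (hM : M 0 1 ≠ 0) (w : W) : ℓ w ≤ M 0 1 := by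
  obtain ⟨i, i', hii', hw⟩ := cs.exists_eq_wordProd_alternatingWord w
  rw [← M.apply_eq_apply_zero_one_of_ne hii']
  by_contra! hlt
  refine cs.not_isReduced_alternatingWord i i' (M.apply_eq_apply_zero_one_of_ne hii' ▸ hM) hlt ?_
  rw [IsReduced, ← hw, length_alternatingWord]

theorem eq_wordProd_alternatingWord_of_length_eq {w : W} (hw : ℓ w = M 0 1) {i i' : Fin 2}
    (hii' : i ≠ i') : w = π (alternatingWord i i' (M 0 1)) := by
  obtain ⟨a, b, hab, hw_eq⟩ := cs.exists_eq_wordProd_alternatingWord w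
  rw [hw] at hw_eq
  have hbraid := cs.wordProd_braidWord_eq a b
  rw [braidWord, braidWord, M.apply_eq_apply_zero_one_of_ne hab,
    M.apply_eq_apply_zero_one_of_ne hab.symm] at hbraid
  have pairs : ∀ a b i i' : Fin 2, a ≠ b → i ≠ i' → i = a ∧ i' = b ∨ i = b ∧ i' = a := by
    decide
  rcases pairs a b i i' hab hii' with ⟨rfl, rfl⟩ | ⟨rfl, rfl⟩
  · exact hw_eq
  · rw [hw_eq, hbraid]

-- `w` begins with a reduced word of `x⁻¹`, so `x * w` is the product of the remaining letters.
theorem length_mul_eq_sub_of_length_eq (hM : M 0 1 ≠ 0) {w : W} (hw : ℓ w = M 0 1) (x : W) :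
    ℓ (x * w) = M 0 1 - ℓ x := by
  refine le_antisymm ?_ (by have := cs.length_le_length_mul_add_left x w; omega)
  obtain ⟨i, i', hii', hx⟩ := cs.exists_eq_wordProd_alternatingWord x⁻¹
  rw [length_inv] at hx
  have hsplit := alternatingWord_add i i' (ℓ x) (M 0 1 - ℓ x)
  have hsplit' := alternatingWord_add i' i (ℓ x) (M 0 1 - ℓ x)
  rw [Nat.add_sub_cancel' (cs.length_le hM x)] at hsplit hsplit'
  have hsuffix : ∃ ρ : List (Fin 2), ρ.length = M 0 1 - ℓ x ∧ w = x⁻¹ * π ρ := by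
    by_cases he : Even (M 0 1 - ℓ x)
    · refine ⟨alternatingWord i i' _, length_alternatingWord .., ?_⟩
      rw [cs.eq_wordProd_alternatingWord_of_length_eq hw hii', hsplit, if_pos he,
        wordProd_append, ← hx]
    · refine ⟨alternatingWord i' i _, length_alternatingWord .., ?_⟩
      rw [cs.eq_wordProd_alternatingWord_of_length_eq hw hii'.symm, hsplit', if_neg he,
        wordProd_append, ← hx]
  obtain ⟨ρ, hρ, rfl⟩ := hsuffix
  rw [mul_inv_cancel_left, ← hρ]
  exact cs.length_wordProd_le ρ

end RankTwo

end CoxeterSystem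

theorem statement16_general {W : Type*} [Group W] (m : ℕ) (hm : 2 ≤ m)
    (cs : CoxeterSystem (CoxeterMatrix.I (m - 2)) W)
    (w₀ : W) (hlen : cs.length w₀ = m) :
    sSup {k : ℕ | ∃ x : W, BruhatLE cs x (x * w₀) ∧ cs.length x = k} =
      (m + 1) / 2 - 1 := by
  have hM : CoxeterMatrix.I (m - 2) 0 1 = m := by
    simp [CoxeterMatrix.I]
    omega
  have hmul (x : W) : cs.length (x * w₀) = m - cs.length x := by
    rw [cs.length_mul_eq_sub_of_length_eq (by omega) (hlen.trans hM.symm), hM]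
  refine IsGreatest.csSup_eq ⟨?_, ?_⟩
  · obtain ⟨x, hx⟩ := cs.exists_length_eq_of_le (w := w₀) (k := (m + 1) / 2 - 1) (by omega)
    exact ⟨x, cs.bruhatLE_of_length_lt (by rw [hmul, hx]; omega), hx⟩
  · rintro _ ⟨x, hx, rfl⟩
    have hne : x ≠ x * w₀ := fun h => by
      rw [left_eq_mul, ← cs.length_eq_zero_iff] at h
      omega
    have := hx.eq_or_length_lt.resolve_left hne
    rw [hmul] at this
    omega

/-- Let `m ≥ 2` and let `(W, {s₁, s₂})` be the finite dihedral Coxeter system of type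
`I₂(m)` (the Coxeter matrix `CoxeterMatrix.I₂ₘ (m - 2)` has off-diagonal entry `m`),
with Bruhat order `≤`, length function `ℓ`, and longest element `w₀` of length `m`.
Then `max {ℓ(x) : x ∈ W, x ≤ x w₀} = ⌈m / 2⌉ - 1`. -/
theorem statement16 {W : Type*} [Group W] (m : ℕ) (hm : 2 ≤ m)
    (cs : CoxeterSystem (CoxeterMatrix.I (m - 2)) W)
    (w₀ : W) (hw₀ : ∀ w, cs.length w ≤ cs.length w₀) (hlen : cs.length w₀ = m) :
    sSup {k : ℕ | ∃ x : W, BruhatLE cs x (x * w₀) ∧ cs.length x = k} =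
      (m + 1) / 2 - 1 :=
  statement16_general m hm cs w₀ hlen
end
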